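/- arXiv:1102.4309 — 2 statements merged into one kernel-verified Lean document; each statement's English description precedes it below -/
import Mathlib

section
/- If f ∈ X* vanishes on the kernel of A (where A has closed range), then there exists a unique h in the image of A with f(x) = ⟨h, A x⟩ for all x ∈ X. -/
/-!
The closed range `K` of `A` is a Hilbert space and, by the open mapping theorem, `A : X → K` is a
quotient map. So `f`, which is constant on the fibres of `A`, factors through a continuous
functional on `K`, and the Riesz representation theorem on `K` supplies `h`. Uniqueness holds
because `K ∩ Kᗮ = 0`.
-/

open RealInnerProductSpace

theorem ContinuousLinearMap.exists_comp_eq_of_surjective_of_ker_le {𝕜 X K F : Type*}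
    [NontriviallyNormedField 𝕜] [NormedAddCommGroup X] [NormedSpace 𝕜 X] [CompleteSpace X]
    [NormedAddCommGroup K] [NormedSpace 𝕜 K] [CompleteSpace K]
    [AddCommGroup F] [Module 𝕜 F] [TopologicalSpace F]
    (A : X →L[𝕜] K) (hA : Function.Surjective A) (f : X →L[𝕜] F)
    (hf : LinearMap.ker (A : X →ₗ[𝕜] K) ≤ LinearMap.ker (f : X →ₗ[𝕜] F)) :
    ∃ g : K →L[𝕜] F, g.comp A = f := by
  let g : K →ₗ[𝕜] F := (LinearMap.ker (A : X →ₗ[𝕜] K)).liftQ f hf ∘ₗ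
    ((A : X →ₗ[𝕜] K).quotKerEquivOfSurjective hA).symm
  have hgA : ∀ x, g (A x) = f x := fun x => by
    have hx : ((A : X →ₗ[𝕜] K).quotKerEquivOfSurjective hA).symm (A x) = Submodule.Quotient.mk x :=
      (LinearEquiv.symm_apply_eq _).2 rfl
    simp only [g, LinearMap.comp_apply, LinearEquiv.coe_coe, hx, Submodule.liftQ_apply,
      ContinuousLinearMap.coe_coe]
  have hg : Continuous g := by
    rw [(A.isQuotientMap hA).continuous_iff]
    convert f.continuous
    exact funext hgA
  exact ⟨⟨g, hg⟩, ContinuousLinearMap.ext hgA⟩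

theorem Submodule.eq_of_mem_of_forall_inner_eq {𝕜 E : Type*} [RCLike 𝕜] [NormedAddCommGroup E]
    [InnerProductSpace 𝕜 E] (K : Submodule 𝕜 E) {u v : E} (hu : u ∈ K) (hv : v ∈ K)
    (h : ∀ w ∈ K, inner 𝕜 u w = inner 𝕜 v w) : u = v := by
  have hmem : u - v ∈ K ⊓ Kᗮ :=
    ⟨K.sub_mem hu hv, (K.mem_orthogonal' _).2 fun w hw => by rw [inner_sub_left, h w hw, sub_self]⟩
  rwa [K.inf_orthogonal_eq_bot, Submodule.mem_bot, sub_eq_zero] at hmem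

/-- generalized Riesz representation: if `f ∈ X*` vanishes on the kernel of
`A` (where `A` has closed range), then there is a unique `h` in the image of `A` with
`f x = ⟪h, A x⟫` for all `x`. -/
theorem generalized_riesz {X H : Type*} [NormedAddCommGroup X] [NormedSpace ℝ X]
    [CompleteSpace X] [NormedAddCommGroup H] [InnerProductSpace ℝ H] [CompleteSpace H]
    (A : X →L[ℝ] H) (hclosed : IsClosed (Set.range A))
    (f : X →L[ℝ] ℝ) (hf : ∀ x, A x = 0 → f x = 0) :
    ∃! h : H, h ∈ LinearMap.range (A : X →ₗ[ℝ] H) ∧ ∀ x, f x = ⟪h, A x⟫ := by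
  set K := LinearMap.range (A : X →ₗ[ℝ] H)
  have : CompleteSpace K := (show IsClosed (K : Set H) from hclosed).completeSpace_coe
  obtain ⟨g, hg⟩ := A.rangeRestrict.exists_comp_eq_of_surjective_of_ker_le
    A.surjective_rangeRestrict f fun x hx => hf x congr(Subtype.val $hx)
  set h := (InnerProductSpace.toDual ℝ K).symm g
  have hrep : ∀ x, f x = ⟪(h : H), A x⟫ := fun x => by
    rw [← hg]
    exact InnerProductSpace.toDual_symm_apply.symm
  refine ⟨h, ⟨h.2, hrep⟩, fun h' ⟨hh', hrep'⟩ => K.eq_of_mem_of_forall_inner_eq hh' h.2 ?_⟩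
  rintro _ ⟨x, rfl⟩
  exact (hrep' x).symm.trans (hrep x)
end

section
/- The composition Ã ∘ Â : X/ker(A) → N⊥(A), sending x + ker(A) to the functional y ↦ ⟨A x, A y⟩, is a Banach space isomorphism with operator norm ‖Ã Â‖ = ‖A‖². -/
/-!
The functional `⟪A x, A ·⟫` vanishes on `ker A`, and vanishes identically only when `A x = 0`.
Conversely, a functional vanishing on `ker A` factors through `A : X → Im A`; the factor is
continuous because `A` is open onto the closed, hence complete, subspace `Im A` (open mapping
theorem), so by Riesz representation in the Hilbert space `Im A` it is `⟪A x₀, ·⟫`. The open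
mapping theorem again makes the resulting bijection `X/ker A → N⊥(A)` an isomorphism. Passing to
the quotient does not change operator norms, and `‖T‖ = ‖A‖²` follows from Cauchy–Schwarz and
`⟪A x, A x⟫ = ‖A x‖²`.
-/

open RealInnerProductSpace

/-- The conullspace `N⊥(A)`: the annihilator in `X*` of the kernel of `A`. -/
noncomputable def conull {X H : Type*} [NormedAddCommGroup X] [NormedSpace ℝ X]
    [NormedAddCommGroup H] [InnerProductSpace ℝ H] (A : X →L[ℝ] H) :
    Submodule ℝ (X →L[ℝ] ℝ) where
  carrier := {f | ∀ x, A x = 0 → f x = 0}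
  add_mem' := fun hf hg x hx => by simp [hf x hx, hg x hx]
  zero_mem' := fun x _ => rfl
  smul_mem' := fun c f hf x hx => by simp [hf x hx]

namespace ContinuousLinearMap

variable {𝕜 E F G : Type*} [NontriviallyNormedField 𝕜]
  [NormedAddCommGroup E] [NormedSpace 𝕜 E] [CompleteSpace E]
  [NormedAddCommGroup F] [NormedSpace 𝕜 F] [CompleteSpace F]
  [NormedAddCommGroup G] [NormedSpace 𝕜 G]

theorem exists_comp_eq_of_ker_le (B : E →L[𝕜] F) (hB : Function.Surjective B) (f : E →L[𝕜] G)
    (hf : B.ker ≤ f.ker) : ∃ g : F →L[𝕜] G, g ∘L B = f := by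
  let g : F →ₗ[𝕜] G := B.ker.liftQ f hf ∘ₗ (B.quotKerEquivOfSurjective hB).symm.toLinearMap
  have hg : ∀ x, g (B x) = f x := fun x => by
    simp only [g, LinearMap.comp_apply, LinearEquiv.coe_coe]
    rw [← ContinuousLinearMap.coe_coe B, LinearMap.quotKerEquivOfSurjective_symm_apply]
    rfl
  have hgB : ⇑g ∘ ⇑B = ⇑f := funext hg
  exact ⟨⟨g, (B.isQuotientMap hB).continuous_iff.mpr (hgB ▸ f.continuous)⟩, ext hg⟩

end ContinuousLinearMap

theorem Submodule.opNorm_comp_mkQL {𝕜 M F : Type*} [NontriviallyNormedField 𝕜]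
    [SeminormedAddCommGroup M] [NormedSpace 𝕜 M] [SeminormedAddCommGroup F] [NormedSpace 𝕜 F]
    (S : Submodule 𝕜 M) (f : (M ⧸ S) →L[𝕜] F) : ‖f ∘L S.mkQL‖ = ‖f‖ := by
  refine le_antisymm ?_ (f.opNorm_le_bound (norm_nonneg _) fun x => ?_)
  · refine (f ∘L S.mkQL).opNorm_le_bound (norm_nonneg _) fun m => ?_
    calc ‖f (S.mkQ m)‖ ≤ ‖f‖ * ‖S.mkQ m‖ := f.le_opNorm _
      _ ≤ ‖f‖ * ‖m‖ := by gcongr; exact Submodule.Quotient.norm_mk_le S m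
  · rcases (norm_nonneg (f ∘L S.mkQL)).eq_or_lt' with h | h
    · obtain ⟨m, rfl⟩ := Submodule.Quotient.mk_surjective S x
      simpa [h] using (f ∘L S.mkQL).le_opNorm m
    · rw [← not_lt, ← lt_div_iff₀' h]
      intro hx
      obtain ⟨m, rfl, hm⟩ := QuotientAddGroup.norm_lt_iff.mp hx
      exact ((lt_div_iff₀' h).1 hm).not_ge ((f ∘L S.mkQL).le_opNorm m)

theorem ContinuousLinearMap.norm_eq_sq_of_apply_apply_eq_inner {E H : Type*}
    [SeminormedAddCommGroup E] [NormedSpace ℝ E] [NormedAddCommGroup H] [InnerProductSpace ℝ H]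
    (A : E →L[ℝ] H) (G : E →L[ℝ] E →L[ℝ] ℝ) (hG : ∀ x y, G x y = ⟪A x, A y⟫) :
    ‖G‖ = ‖A‖ ^ 2 := by
  refine le_antisymm (G.opNorm_le_bound₂ (by positivity) fun x y => ?_) ?_
  · calc ‖G x y‖ = ‖⟪A x, A y⟫‖ := by rw [hG]
      _ ≤ ‖A x‖ * ‖A y‖ := norm_inner_le_norm _ _
      _ ≤ ‖A‖ * ‖x‖ * (‖A‖ * ‖y‖) := by gcongr <;> exact A.le_opNorm _
      _ = ‖A‖ ^ 2 * ‖x‖ * ‖y‖ := by ring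
  · rw [← Real.sq_sqrt (norm_nonneg G)]
    refine pow_le_pow_left₀ (norm_nonneg A) (A.opNorm_le_bound (Real.sqrt_nonneg _) fun x => ?_) 2
    refine (pow_le_pow_iff_left₀ (norm_nonneg _) (by positivity) two_ne_zero).mp ?_
    calc ‖A x‖ ^ 2 = G x x := by rw [hG, real_inner_self_eq_norm_sq]
      _ ≤ ‖G x x‖ := Real.le_norm_self _
      _ ≤ ‖G‖ * ‖x‖ * ‖x‖ := G.le_opNorm₂ x x
      _ = (√‖G‖ * ‖x‖) ^ 2 := by rw [mul_pow, Real.sq_sqrt (norm_nonneg G)]; ring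

section Conull

variable {X H : Type*} [NormedAddCommGroup X] [NormedSpace ℝ X]
  [NormedAddCommGroup H] [InnerProductSpace ℝ H]

theorem isClosed_conull (A : X →L[ℝ] H) : IsClosed (conull A : Set (X →L[ℝ] ℝ)) := by
  show IsClosed {f : X →L[ℝ] ℝ | ∀ x, A x = 0 → f x = 0}
  simp only [Set.ofPred_forall]
  exact isClosed_iInter fun x => isClosed_iInter fun _ =>
    isClosed_eq (continuous_eval_const x) continuous_const

instance (A : X →L[ℝ] H) : CompleteSpace (conull A) := (isClosed_conull A).completeSpace_coe

theorem exists_eq_inner_of_mem_conull [CompleteSpace X] [CompleteSpace H] {A : X →L[ℝ] H}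
    (hclosed : IsClosed (Set.range A)) {f : X →L[ℝ] ℝ} (hf : f ∈ conull A) :
    ∃ x₀, ∀ y, f y = ⟪A x₀, A y⟫ := by
  have : CompleteSpace A.range :=
    (LinearMap.coe_range (A : X →ₗ[ℝ] H) ▸ hclosed).completeSpace_coe
  obtain ⟨g, hg⟩ := A.rangeRestrict.exists_comp_eq_of_ker_le
    (LinearMap.surjective_rangeRestrict _) f fun x hx => hf x (congrArg Subtype.val hx)
  obtain ⟨x₀, hx₀⟩ := ((InnerProductSpace.toDual ℝ A.range).symm g).2
  refine ⟨x₀, fun y => ?_⟩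
  rw [← hg, ContinuousLinearMap.comp_apply, ← InnerProductSpace.toDual_symm_apply,
    Submodule.coe_inner, ← hx₀]
  rfl

end Conull

/-- The composition `Ã ∘ Â : X/ker(A) → N⊥(A)`, sending `x + ker(A)` to the
functional `y ↦ ⟪A x, A y⟫`, is a Banach space isomorphism with operator norm `‖Ã Â‖ = ‖A‖²`. -/
theorem atilde_ahat_iso {X H : Type*} [NormedAddCommGroup X] [NormedSpace ℝ X]
    [CompleteSpace X] [NormedAddCommGroup H] [InnerProductSpace ℝ H] [CompleteSpace H]
    (A : X →L[ℝ] H) (hclosed : IsClosed (Set.range A))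
    (T : (X ⧸ LinearMap.ker (A : X →ₗ[ℝ] H)) →L[ℝ] (X →L[ℝ] ℝ))
    (hT : ∀ x y : X, T (Submodule.Quotient.mk x) y = ⟪A x, A y⟫) :
    (∃ e : (X ⧸ LinearMap.ker (A : X →ₗ[ℝ] H)) ≃L[ℝ] (conull A),
        ∀ q : X ⧸ LinearMap.ker (A : X →ₗ[ℝ] H), (e q : X →L[ℝ] ℝ) = T q) ∧
      ‖T‖ = ‖A‖ ^ 2 := by
  have : IsClosed (LinearMap.ker (A : X →ₗ[ℝ] H) : Set X) := A.isClosed_ker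
  have hmem : ∀ q, T q ∈ conull A := by
    rintro ⟨x⟩ y hy
    exact (hT x y).trans (by rw [hy, inner_zero_right])
  let Tc := T.codRestrict (conull A) hmem
  -- Without the explicit arguments, unifying the norm topology of the quotient with the
  -- quotient topology of the statement does not terminate in time.
  refine ⟨⟨.ofBijective (𝕜 := ℝ) (𝕜' := ℝ)
    (E := X ⧸ LinearMap.ker (A : X →ₗ[ℝ] H)) (F := conull A) Tc ?_ ?_, fun q => ?_⟩, ?_⟩
  · refine LinearMap.ker_eq_bot'.mpr fun q hq => ?_
    obtain ⟨x, rfl⟩ := Submodule.Quotient.mk_surjective _ q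
    have hxx : ⟪A x, A x⟫ = 0 := (hT x x).symm.trans (congrArg (fun f : conull A => f.1 x) hq)
    exact (Submodule.Quotient.mk_eq_zero _).mpr (inner_self_eq_zero.mp hxx)
  · refine LinearMap.range_eq_top.mpr fun ⟨f, hf⟩ => ?_
    obtain ⟨x₀, hx₀⟩ := exists_eq_inner_of_mem_conull hclosed hf
    exact ⟨Submodule.Quotient.mk x₀,
      Subtype.ext <| ContinuousLinearMap.ext fun y => (hT x₀ y).trans (hx₀ y).symm⟩
  · rfl
  · rw [← Submodule.opNorm_comp_mkQL]
    exact A.norm_eq_sq_of_apply_apply_eq_inner _ hT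
end
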